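/- The bivariate exponential generating function for the depth statistic over all permutations satisfies (1+z)·P^{dp}(x,z) − z = B^{des}(xz, 1/z²) · √((1+x)/(1−x)), where P^{dp}(x,z) = Σ_{n≥0} Σ_{π∈S_n} z^{dp(π)} xⁿ/n! and B^{des} is the EGF of ballot permutations by descents, and √((1+x)/(1−x)) = Σ_n b_n xⁿ/n! is the EGF of the ballot permutation counts. -/

import Mathlib

open scoped Classical

/-- Number of descents of a word. -/
def descents (l : List ℤ) : ℕ := ((l.zip l.tail).filter (fun p => decide (p.2 < p.1))).length

/-- Number of ascents of a word. -/
def ascents (l : List ℤ) : ℕ := ((l.zip l.tail).filter (fun p => decide (p.1 < p.2))).length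

/-- Height of a word: ascents minus descents. -/
def ht (l : List ℤ) : ℤ := (ascents l : ℤ) - (descents l : ℤ)

/-- A word is ballot if every prefix has nonnegative height. -/
def IsBallot (l : List ℤ) : Prop := ∀ k : ℕ, 0 ≤ ht (l.take k)

/-- Depth: negative of the minimum height over nonempty prefixes (0 for the empty word;
note every word of length ≥ 1 has a prefix of height 0, so folding with 0 is harmless). -/
def depth (l : List ℤ) : ℤ :=
  -(((List.range l.length).map (fun i => ht (l.take (i + 1)))).foldr min 0)

/-- Number of peaks of a word. -/
def peaks (l : List ℤ) : ℕ :=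
  ((l.zip (l.tail.zip l.tail.tail)).filter
    (fun p => decide (p.1 < p.2.1 ∧ p.2.2 < p.2.1))).length

/-- The list [1, 2, ..., n] as integers. -/
def baseList (n : ℕ) : List ℤ := (List.range n).map (fun i => (i : ℤ) + 1)

/-- The one-line word of a permutation of {1,…,n}. -/
def permList {n : ℕ} (σ : Equiv.Perm (Fin n)) : List ℤ :=
  List.ofFn (fun i => ((σ i : ℕ) : ℤ) + 1)

/-- Standardization of a word on distinct integers. -/
def stdz (l : List ℤ) : List ℤ :=
  l.map (fun x => ((l.filter (fun y => decide (y < x))).length : ℤ) + 1)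

/-- Coefficient of xⁿ/n! in P^{dp}(x,z). -/
noncomputable def Pdp (n : ℕ) (z : ℝ) : ℝ :=
  ∑ σ : Equiv.Perm (Fin n), z ^ (depth (permList σ)).toNat

/-- Coefficient of xⁿ/n! in B^{des}(x,t). -/
noncomputable def Bdes (n : ℕ) (t : ℝ) : ℝ :=
  ∑ σ : Equiv.Perm (Fin n),
    if IsBallot (permList σ) then t ^ descents (permList σ) else 0

/-- Number of ballot permutations of length n. -/
noncomputable def bcount (n : ℕ) : ℕ :=
  Nat.card {σ : Equiv.Perm (Fin n) // IsBallot (permList σ)}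

/-!
Read a permutation `w` of length `n ≥ 1` through its height walk: `p i` is the number of ascents
minus the number of descents of `w₁ ⋯ w_{i+1}`, a walk with steps `±1` whose minimum is `-dp(w)`.
Cut `w` after `c` letters. The reversed prefix and the suffix are both ballot exactly when the walk
stays weakly above `p (c - 1)` before the cut and weakly above `p c` after it, and a `±1` walk
admits exactly two such cuts: just before its first and just after its last visit to the minimum.
A nonempty word `u` with distinct letters has `|u| = ht u + 1 + 2 des u`, so the weight `z^|u| (1/z²)^(des u)` of the
reversed prefix is `z^dp(w)` at the first cut and `z^(dp(w)+1)` at the second. Grouping all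
permutations by the set of letters of the prefix turns the sum over cuts into a binomial
convolution whose factors only see the relative order of the letters: they are the coefficients of
`B^des(xz, 1/z²)` and of `√((1+x)/(1-x))`.
-/

open Finset

def steps (l : List ℤ) : List ℤ := (l.zip l.tail).map fun p => (p.2 - p.1).sign

@[simp]
lemma length_steps (l : List ℤ) : (steps l).length = l.length - 1 := by
  simp [steps]

@[simp]
lemma getElem_steps (l : List ℤ) (i : ℕ) (h : i < (steps l).length) :
    (steps l)[i] = (l[i + 1]'(by simp at h; omega) - l[i]'(by simp at h; omega)).sign := by
  simp [steps]

lemma steps_take_succ (l : List ℤ) (k : ℕ) : steps (l.take (k + 1)) = (steps l).take k :=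
  List.ext_getElem (by simp; omega) fun i _ _ => by simp

lemma steps_drop (l : List ℤ) (c : ℕ) : steps (l.drop c) = (steps l).drop c :=
  List.ext_getElem (by simp; omega) fun i _ _ => by simp [Nat.add_assoc]

lemma steps_reverse (l : List ℤ) : steps l.reverse = ((steps l).map fun x => -x).reverse := by
  refine List.ext_getElem (by simp) fun i h₁ h₂ => ?_
  simp at h₁
  have e₁ : l.length - 1 - 1 - i = l.length - 1 - (i + 1) := by omega
  have e₂ : l.length - 1 - (i + 1) + 1 = l.length - 1 - i := by omega
  simp [List.getElem_reverse, e₁, e₂, ← Int.sign_neg]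

lemma sum_map_sign_sub (L : List (ℤ × ℤ)) :
    (L.map fun p => (p.2 - p.1).sign).sum =
      ((L.filter fun p => p.1 < p.2).length : ℤ) - (L.filter fun p => p.2 < p.1).length := by
  induction L with
  | nil => simp
  | cons p L ih =>
    rcases lt_trichotomy p.1 p.2 with h | h | h
    · simp [h, h.not_gt, Int.sign_eq_one_of_pos (sub_pos.2 h), ih]; ring
    · simp [h, ih]
    · simp [h, h.not_gt, Int.sign_eq_neg_one_of_neg (sub_neg.2 h), ih]; ring

lemma ht_eq_sum_steps (l : List ℤ) : ht l = (steps l).sum := by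
  rw [steps, sum_map_sign_sub, ht, ascents, descents]

lemma descents_eq_length_filter_steps (l : List ℤ) :
    descents l = ((steps l).filter (· = -1)).length := by
  simp only [descents, steps, List.filter_map, List.length_map]
  congr 2
  ext p
  simp [Int.sign_eq_neg_one_iff_neg]

lemma List.Nodup.steps_eq_one_or {l : List ℤ} (hl : l.Nodup) {x : ℤ} (hx : x ∈ steps l) :
    x = 1 ∨ x = -1 := by
  obtain ⟨i, hi, rfl⟩ := List.getElem_of_mem hx
  have hne : l[i + 1]'(by simp at hi; omega) ≠ l[i]'(by simp at hi; omega) := by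
    simp [hl.getElem_inj_iff]
  rw [getElem_steps]
  rcases hne.lt_or_gt with h | h
  · exact .inr (Int.sign_eq_neg_one_of_neg (sub_neg.2 h))
  · exact .inl (Int.sign_eq_one_of_pos (sub_pos.2 h))

lemma sum_add_two_mul_length_filter_neg_one {s : List ℤ} (hs : ∀ x ∈ s, x = 1 ∨ x = -1) :
    s.sum + 2 * (s.filter (· = -1)).length = s.length := by
  induction s with
  | nil => simp
  | cons x s ih =>
    rcases hs x (by simp) with rfl | rfl <;>
      simp [← ih fun y hy => hs y (by simp [hy])] <;> ring

lemma ht_add_two_mul_descents {l : List ℤ} (hl : l.Nodup) (hne : l ≠ []) :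
    ht l + 2 * descents l + 1 = l.length := by
  have := sum_add_two_mul_length_filter_neg_one fun x hx => hl.steps_eq_one_or hx
  have hlen : 0 < l.length := List.length_pos_iff.2 hne
  rw [ht_eq_sum_steps, descents_eq_length_filter_steps]
  simp only [length_steps] at this
  omega

lemma ht_reverse (l : List ℤ) : ht l.reverse = -ht l := by
  rw [ht_eq_sum_steps, ht_eq_sum_steps, steps_reverse, List.sum_reverse, List.sum_neg]

def prefixHt (l : List ℤ) (i : ℕ) : ℤ := ((steps l).take i).sum

lemma ht_take_succ (l : List ℤ) (i : ℕ) : ht (l.take (i + 1)) = prefixHt l i := by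
  rw [ht_eq_sum_steps, steps_take_succ, prefixHt]

lemma ht_take_of_pos {l : List ℤ} {c : ℕ} (hc : 0 < c) : ht (l.take c) = prefixHt l (c - 1) := by
  rw [← ht_take_succ, Nat.sub_add_cancel hc]

@[simp]
lemma prefixHt_zero (l : List ℤ) : prefixHt l 0 = 0 := by
  simp [prefixHt]

lemma prefixHt_succ_of_nodup {l : List ℤ} (hl : l.Nodup) {i : ℕ} (hi : i + 1 < l.length) :
    prefixHt l (i + 1) = prefixHt l i + 1 ∨ prefixHt l (i + 1) = prefixHt l i - 1 := by
  have hi' : i < (steps l).length := by simp; omega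
  rw [prefixHt, List.sum_take_succ _ _ hi']
  rcases hl.steps_eq_one_or (List.getElem_mem hi') with h | h <;> simp [h, prefixHt, sub_eq_add_neg]

lemma prefixHt_of_length_le {l : List ℤ} {i : ℕ} (hi : l.length ≤ i + 1) :
    prefixHt l i = ht l := by
  rw [prefixHt, List.take_of_length_le (by simp; omega), ht_eq_sum_steps]

lemma prefixHt_take {l : List ℤ} {i c : ℕ} (hi : i < c) :
    prefixHt (l.take c) i = prefixHt l i := by
  obtain ⟨c, rfl⟩ := Nat.exists_eq_add_of_lt hi
  rw [prefixHt, steps_take_succ, List.take_take,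
    min_eq_left (by omega), prefixHt]

lemma prefixHt_drop (l : List ℤ) (c j : ℕ) :
    prefixHt (l.drop c) j = prefixHt l (c + j) - prefixHt l c := by
  simp [prefixHt, steps_drop, List.take_add]

lemma prefixHt_reverse (l : List ℤ) (j : ℕ) :
    prefixHt l.reverse j = prefixHt l (l.length - 1 - j) - ht l := by
  have hsplit := List.sum_take_add_sum_drop (steps l) (l.length - 1 - j)
  rw [prefixHt, steps_reverse, List.take_reverse, List.sum_reverse, ← List.map_drop,
    ← List.sum_neg, List.length_map, length_steps, ht_eq_sum_steps, prefixHt]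
  linarith

lemma isBallot_iff_prefixHt {l : List ℤ} : IsBallot l ↔ ∀ i < l.length, 0 ≤ prefixHt l i := by
  refine ⟨fun h i _ => ht_take_succ l i ▸ h (i + 1), fun h k => ?_⟩
  rcases k with _ | i
  · simp [ht, ascents, descents]
  · rw [ht_take_succ]
    rcases lt_or_ge i l.length with hi | hi
    · exact h i hi
    · rcases eq_or_ne l [] with rfl | hne
      · simp [prefixHt, steps]
      · have hpos := List.length_pos_iff.2 hne
        rw [prefixHt_of_length_le (by omega),
          ← prefixHt_of_length_le (i := l.length - 1) (by omega)]
        exact h _ (by omega)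

lemma isBallot_drop_iff {l : List ℤ} {c : ℕ} :
    IsBallot (l.drop c) ↔ ∀ i, c ≤ i → i < l.length → prefixHt l c ≤ prefixHt l i := by
  simp only [isBallot_iff_prefixHt, List.length_drop, prefixHt_drop, sub_nonneg]
  refine ⟨fun h i hci hi => ?_, fun h j hj => h _ (by omega) (by omega)⟩
  obtain ⟨j, rfl⟩ := Nat.exists_eq_add_of_le hci
  exact h j (by omega)

lemma isBallot_reverse_take_iff {l : List ℤ} {c : ℕ} (hc : c ≤ l.length) :
    IsBallot (l.take c).reverse ↔ ∀ i < c, prefixHt l (c - 1) ≤ prefixHt l i := by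
  rcases Nat.eq_zero_or_pos c with rfl | hc0
  · simp [isBallot_iff_prefixHt]
  simp only [isBallot_iff_prefixHt, List.length_reverse, List.length_take, prefixHt_reverse,
    min_eq_left hc, ht_take_of_pos hc0, sub_nonneg]
  refine ⟨fun h i hi => ?_, fun h j hj => ?_⟩
  · have := h (c - 1 - i) (by omega)
    rwa [prefixHt_take (by omega), show c - 1 - (c - 1 - i) = i by omega] at this
  · rw [prefixHt_take (by omega)]
    exact h _ (by omega)

lemma List.foldr_min_le_of_mem {α : Type*} [LinearOrder α] {L : List α} {x : α} (a : α)
    (hx : x ∈ L) : L.foldr min a ≤ x := by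
  induction L with
  | nil => simp at hx
  | cons y L ih =>
    rcases List.mem_cons.1 hx with rfl | hx
    · exact min_le_left _ _
    · exact (min_le_right _ _).trans (ih hx)

lemma List.foldr_min_eq_or_mem {α : Type*} [LinearOrder α] (L : List α) (a : α) :
    L.foldr min a = a ∨ L.foldr min a ∈ L := by
  induction L with
  | nil => simp
  | cons y L ih =>
    rw [List.foldr_cons]
    rcases min_choice y (L.foldr min a) with h | h <;> rw [h]
    · exact .inr List.mem_cons_self
    · exact ih.imp_right (List.mem_cons_of_mem y)

lemma depth_eq_prefixHt (l : List ℤ) :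
    depth l = -((List.range l.length).map (prefixHt l)).foldr min 0 := by
  simp only [depth, ht_take_succ]

lemma neg_depth_le_prefixHt {l : List ℤ} {i : ℕ} (hi : i < l.length) :
    -depth l ≤ prefixHt l i := by
  rw [depth_eq_prefixHt, neg_neg]
  exact List.foldr_min_le_of_mem _ (List.mem_map_of_mem (List.mem_range.2 hi))

lemma exists_prefixHt_eq_neg_depth {l : List ℤ} (hl : l ≠ []) :
    ∃ i < l.length, prefixHt l i = -depth l := by
  have hpos := List.length_pos_iff.2 hl
  rw [depth_eq_prefixHt, neg_neg]
  rcases List.foldr_min_eq_or_mem ((List.range l.length).map (prefixHt l)) 0 with h | h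
  · exact ⟨0, hpos, by simp [h]⟩
  · obtain ⟨i, hi, he⟩ := List.mem_map.1 h
    exact ⟨i, List.mem_range.1 hi, he⟩

lemma depth_nonneg (l : List ℤ) : 0 ≤ depth l := by
  rcases eq_or_ne l [] with rfl | hne
  · simp [depth]
  · simpa using neg_depth_le_prefixHt (List.length_pos_iff.2 hne)

section Walk

variable {p : ℕ → ℤ} {n a b c : ℕ}

def HasUnitSteps (p : ℕ → ℤ) (n : ℕ) : Prop :=
  ∀ i, i + 1 < n → p (i + 1) = p i + 1 ∨ p (i + 1) = p i - 1

def IsFirstMin (p : ℕ → ℤ) (n a : ℕ) : Prop :=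
  a < n ∧ (∀ i < n, p a ≤ p i) ∧ ∀ i < a, p a < p i

def IsLastMin (p : ℕ → ℤ) (n b : ℕ) : Prop :=
  b < n ∧ (∀ i < n, p b ≤ p i) ∧ ∀ i, b < i → i < n → p b < p i

def IsCut (p : ℕ → ℤ) (n c : ℕ) : Prop :=
  (∀ i < c, p (c - 1) ≤ p i) ∧ ∀ i, c ≤ i → i < n → p c ≤ p i

lemma exists_isFirstMin_isLastMin (hn : 0 < n) : ∃ a b, IsFirstMin p n a ∧ IsLastMin p n b := by
  set S := (range n).filter fun i => ∀ j < n, p i ≤ p j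
  have hS : S.Nonempty := by
    obtain ⟨i, hi, hmin⟩ := (range n).exists_min_image p (nonempty_range_iff.2 hn.ne')
    exact ⟨i, mem_filter.2 ⟨hi, fun j hj => hmin j (mem_range.2 hj)⟩⟩
  have hmem {i} : i ∈ S ↔ i < n ∧ ∀ j < n, p i ≤ p j := by simp [S]
  obtain ⟨ha, hpa⟩ := hmem.1 (S.min'_mem hS)
  obtain ⟨hb, hpb⟩ := hmem.1 (S.max'_mem hS)
  refine ⟨S.min' hS, S.max' hS, ⟨ha, hpa, fun i hi => ?_⟩, ⟨hb, hpb, fun i hi hin => ?_⟩⟩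
  · refine lt_of_not_ge fun h => hi.not_ge (S.min'_le i (hmem.2 ⟨hi.trans ha, fun j hj => ?_⟩))
    exact h.trans (hpa j hj)
  · refine lt_of_not_ge fun h => hi.not_ge (S.le_max' i (hmem.2 ⟨hin, fun j hj => ?_⟩))
    exact h.trans (hpb j hj)

lemma IsFirstMin.apply_eq (ha : IsFirstMin p n a) (hb : IsLastMin p n b) : p a = p b :=
  le_antisymm (ha.2.1 b hb.1) (hb.2.1 a ha.1)

lemma IsFirstMin.le (ha : IsFirstMin p n a) (hb : IsLastMin p n b) : a ≤ b :=
  not_lt.1 fun h => (ha.2.2 b h).ne (ha.apply_eq hb)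

lemma IsFirstMin.apply_pred (hstep : HasUnitSteps p n) (ha : IsFirstMin p n a) (ha0 : 0 < a) :
    p (a - 1) = p a + 1 := by
  have := ha.2.2 (a - 1) (by omega)
  rcases hstep (a - 1) (by have := ha.1; omega) with h | h <;>
    rw [Nat.sub_add_cancel ha0] at h <;> omega

lemma IsLastMin.apply_succ (hstep : HasUnitSteps p n) (hb : IsLastMin p n b) (hb1 : b + 1 < n) :
    p (b + 1) = p b + 1 := by
  have := hb.2.2 (b + 1) (by omega) hb1
  rcases hstep b hb1 with h | h <;> omega

lemma IsFirstMin.isCut (hstep : HasUnitSteps p n) (ha : IsFirstMin p n a) : IsCut p n a := by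
  refine ⟨fun i hi => ?_, fun i _ hi => ha.2.1 i hi⟩
  have := ha.2.2 i hi
  rw [ha.apply_pred hstep (by omega)]
  omega

lemma IsLastMin.isCut_succ (hstep : HasUnitSteps p n) (hb : IsLastMin p n b) :
    IsCut p n (b + 1) := by
  refine ⟨fun i hi => by simpa using hb.2.1 i (by have := hb.1; omega), fun i hi hin => ?_⟩
  have := hb.2.2 i (by omega) hin
  rw [hb.apply_succ hstep (by omega)]
  omega

lemma IsCut.eq_or_eq (hstep : HasUnitSteps p n) (ha : IsFirstMin p n a) (hb : IsLastMin p n b)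
    (hc : c ≤ n) (hcut : IsCut p n c) : c = a ∨ c = b + 1 := by
  have hpb := (ha.apply_eq hb).symm
  obtain ⟨ha, hmin, hfirst⟩ := ha
  obtain ⟨hb, -, hlast⟩ := hb
  obtain ⟨hleft, hright⟩ := hcut
  rcases Nat.eq_zero_or_pos c with rfl | hc0
  · have := hright a (Nat.zero_le _) ha
    have := fun ha0 => hfirst 0 ha0
    omega
  rcases hc.lt_or_eq with hcn | rfl
  · rcases hstep (c - 1) (by omega) with h | h <;> rw [Nat.sub_add_cancel hc0] at h
    · have hbelow : p (c - 1) ≤ p a := by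
        rcases lt_or_ge a c with hac | hac
        · exact hleft a hac
        · have := hright a hac ha
          omega
      have := hmin (c - 1) (by omega)
      have hbc : ¬ c ≤ b := fun hcb => by have := hright b hcb hb; omega
      have hcb : ¬ b < c - 1 := fun hbc => by have := hlast (c - 1) hbc (by omega); omega
      omega
    · have hbelow : p c ≤ p a := by
        rcases lt_or_ge b c with hbc | hbc
        · have := hleft b hbc
          omega
        · exact hpb ▸ hright b hbc hb
      have := hmin c hcn
      have hac : ¬ a < c := fun hac => by have := hleft a hac; omega
      have hca : ¬ c < a := fun hca => by have := hfirst c hca; omega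
      omega
  · have := hleft b (by omega)
    have := hmin (c - 1) (by omega)
    have := fun hbc => hlast (c - 1) hbc (by omega)
    omega

theorem filter_isCut_eq_pair (hstep : HasUnitSteps p n) (ha : IsFirstMin p n a)
    (hb : IsLastMin p n b) :
    (range (n + 1)).filter (IsCut p n) = {a, b + 1} := by
  ext c
  simp only [mem_filter, mem_range, mem_insert, mem_singleton]
  refine ⟨fun ⟨hc, hcut⟩ => hcut.eq_or_eq hstep ha hb (by omega), ?_⟩
  rintro (rfl | rfl)
  · exact ⟨by have := ha.1; omega, ha.isCut hstep⟩
  · exact ⟨by have := hb.1; omega, hb.isCut_succ hstep⟩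

end Walk

/-- `z ^ c * (1 / z ^ 2) ^ descents u` is the weight of `u = (w.take c).reverse` in
`B^des(xz, 1/z²)`. -/
noncomputable def cutWeight (z : ℝ) (w : List ℤ) (c : ℕ) : ℝ :=
  if IsBallot (w.take c).reverse ∧ IsBallot (w.drop c) then
    z ^ c * (1 / z ^ 2) ^ descents (w.take c).reverse
  else 0

lemma isBallot_cut_iff {w : List ℤ} {c : ℕ} (hc : c ≤ w.length) :
    IsBallot (w.take c).reverse ∧ IsBallot (w.drop c) ↔ IsCut (prefixHt w) w.length c := by
  rw [isBallot_reverse_take_iff hc, isBallot_drop_iff, IsCut]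

lemma weight_reverse_take_eq_zpow {z : ℝ} (hz : z ≠ 0) {w : List ℤ} (hw : w.Nodup) {c : ℕ} (hc0 : 0 < c)
    (hc : c ≤ w.length) :
    z ^ c * (1 / z ^ 2) ^ descents (w.take c).reverse = z ^ (1 - prefixHt w (c - 1)) := by
  have hu := ht_add_two_mul_descents (List.nodup_reverse.2 (hw.sublist (w.take_sublist c)))
    (List.ne_nil_of_length_pos (by simp; omega))
  rw [ht_reverse, ht_take_of_pos hc0] at hu
  simp only [List.length_reverse, List.length_take, min_eq_left hc] at hu
  rw [show 1 - prefixHt w (c - 1) = (c : ℤ) + -(2 * descents (w.take c).reverse : ℕ) by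
      push_cast; omega, zpow_add₀ hz, zpow_neg, zpow_natCast, zpow_natCast, pow_mul, one_div,
    inv_pow]

theorem sum_cutWeight {z : ℝ} (hz : z ≠ 0) {w : List ℤ} (hw : w.Nodup) (hne : w ≠ []) :
    ∑ c ∈ range (w.length + 1), cutWeight z w c = (1 + z) * z ^ (depth w).toNat := by
  have hstep : HasUnitSteps (prefixHt w) w.length := fun _ => prefixHt_succ_of_nodup hw
  obtain ⟨a, b, ha, hb⟩ := exists_isFirstMin_isLastMin (List.length_pos_iff.2 hne)
  have hpa : prefixHt w a = -depth w := by
    obtain ⟨i, hi, hpi⟩ := exists_prefixHt_eq_neg_depth hne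
    exact le_antisymm (hpi ▸ ha.2.1 i hi) (neg_depth_le_prefixHt ha.1)
  have hpb : prefixHt w b = -depth w := (ha.apply_eq hb) ▸ hpa
  obtain ⟨k, hk⟩ : ∃ k : ℕ, depth w = k := ⟨_, (Int.toNat_of_nonneg (depth_nonneg w)).symm⟩
  have hwa : z ^ a * (1 / z ^ 2) ^ descents (w.take a).reverse = z ^ k := by
    rcases Nat.eq_zero_or_pos a with rfl | ha0
    · simp at hpa
      simp [descents, show k = 0 by omega]
    · rw [weight_reverse_take_eq_zpow hz hw ha0 ha.1.le, ha.apply_pred hstep ha0, hpa, hk,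
        ← zpow_natCast]
      congr 1
      ring
  have hwb : z ^ (b + 1) * (1 / z ^ 2) ^ descents (w.take (b + 1)).reverse = z ^ (k + 1) := by
    rw [weight_reverse_take_eq_zpow hz hw (c := b + 1) (by omega) hb.1, Nat.add_sub_cancel, hpb, hk,
      ← zpow_natCast]
    congr 1
    push_cast
    ring
  simp only [cutWeight]
  rw [← sum_filter, filter_congr fun c hc => isBallot_cut_iff (Nat.lt_succ_iff.1 (mem_range.1 hc)),
    filter_isCut_eq_pair hstep ha hb, sum_pair (by have := ha.le hb; omega), hwa, hwb, hk,
    Int.toNat_natCast]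
  ring

section Arrangements

variable {α : Type*} [DecidableEq α] {A T : Finset α} {u : List α}

noncomputable def permsOf (A : Finset α) : Finset (List α) := A.toList.permutations.toFinset

lemma mem_permsOf : u ∈ permsOf A ↔ (u : Multiset α) = A.val := by
  rw [permsOf, List.mem_toFinset, List.mem_permutations, ← Multiset.coe_eq_coe,
    Finset.coe_toList]

lemma mem_permsOf_iff_nodup : u ∈ permsOf A ↔ u.Nodup ∧ u.toFinset = A := by
  rw [mem_permsOf]
  refine ⟨fun h => ⟨Multiset.coe_nodup.1 (h ▸ A.nodup), ?_⟩, fun ⟨hu, hA⟩ => ?_⟩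
  · rw [← A.val_toFinset, ← h]
    rfl
  · rw [← hA, List.toFinset_val, hu.dedup]

lemma length_of_mem_permsOf (h : u ∈ permsOf A) : u.length = A.card := by
  rw [← Multiset.coe_card, mem_permsOf.1 h, Finset.card_val]

lemma card_permsOf (A : Finset α) : (permsOf A).card = A.card.factorial := by
  rw [permsOf, List.toFinset_card_of_nodup (List.nodup_permutations _ A.nodup_toList),
    List.length_permutations, Finset.length_toList]

theorem sum_permsOf_split {R : Type*} [CommSemiring R] (f g : List α → R) {c : ℕ}
    (hc : c ≤ T.card) :
    ∑ w ∈ permsOf T, f (w.take c).reverse * g (w.drop c) =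
      ∑ A ∈ powersetCard c T, (∑ u ∈ permsOf A, f u) * ∑ v ∈ permsOf (T \ A), g v := by
  simp_rw [sum_mul_sum, ← sum_product']
  rw [← sum_sigma (powersetCard c T) (fun A => permsOf A ×ˢ permsOf (T \ A))
    fun x => f x.2.1 * g x.2.2]
  refine sum_nbij' (fun w => ⟨(w.take c).toFinset, ((w.take c).reverse, w.drop c)⟩)
    (fun x => x.2.1.reverse ++ x.2.2) (fun w hw => ?_) (fun x hx => ?_) (fun w _ => by simp)
    (fun x hx => ?_) (fun _ _ => rfl)
  · have hw' := mem_permsOf.1 hw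
    have hnd : (w.take c).Nodup :=
      (Multiset.coe_nodup.1 (hw' ▸ T.nodup)).sublist (w.take_sublist c)
    have hval : (w.take c).toFinset.val = ↑(w.take c) := by rw [List.toFinset_val, hnd.dedup]
    have hsum : (↑(w.take c) : Multiset α) + ↑(w.drop c) = T.val := by
      rw [Multiset.coe_add, List.take_append_drop, hw']
    simp only [mem_sigma, mem_powersetCard, mem_product, mem_permsOf, Multiset.coe_reverse,
      Finset.sdiff_val, hval, ← Finset.val_le_iff, ← hsum, add_tsub_cancel_left, and_true]
    refine ⟨Multiset.le_add_right _ _, ?_⟩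
    rw [List.toFinset_card_of_nodup hnd, List.length_take, length_of_mem_permsOf hw]
    omega
  · obtain ⟨A, u, v⟩ := x
    simp only [mem_sigma, mem_powersetCard, mem_product, mem_permsOf] at hx
    obtain ⟨⟨hAT, -⟩, hu, hv⟩ := hx
    rw [mem_permsOf, ← Multiset.coe_add, Multiset.coe_reverse, hu, hv, Finset.sdiff_val,
      add_tsub_cancel_of_le (Finset.val_le_iff.2 hAT)]
  · obtain ⟨A, u, v⟩ := x
    simp only [mem_sigma, mem_powersetCard, mem_product] at hx
    obtain ⟨⟨-, hAc⟩, hu, -⟩ := hx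
    have hlen : u.reverse.length = c := by
      rw [List.length_reverse, length_of_mem_permsOf hu, hAc]
    simp [List.take_left' hlen, List.drop_left' hlen, (mem_permsOf_iff_nodup.1 hu).2]

end Arrangements

lemma Int.sign_sub_congr {a b c d : ℤ} (h₁ : a < b ↔ c < d) (h₂ : b < a ↔ d < c) :
    (b - a).sign = (d - c).sign := by
  rcases lt_trichotomy a b with h | h | h
  · rw [Int.sign_eq_one_of_pos (sub_pos.2 h), Int.sign_eq_one_of_pos (sub_pos.2 (h₁.1 h))]
  · have hcd : c = d := le_antisymm (not_lt.1 fun h' => (h₂.2 h').ne h.symm)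
      (not_lt.1 fun h' => (h₁.2 h').ne h)
    simp [h, hcd]
  · rw [Int.sign_eq_neg_one_of_neg (sub_neg.2 h), Int.sign_eq_neg_one_of_neg (sub_neg.2 (h₂.1 h))]

lemma steps_ofFn_congr {k : ℕ} {f g : Fin k → ℤ} (h : ∀ i j, f i < f j ↔ g i < g j) :
    steps (List.ofFn f) = steps (List.ofFn g) :=
  List.ext_getElem (by simp) fun i _ _ => by simpa using Int.sign_sub_congr (h _ _) (h _ _)

theorem sum_permsOf_eq_sum_perm {R : Type*} [AddCommMonoid R] (A : Finset ℤ) (F : List ℤ → R)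
    (hF : ∀ u v, u.length = v.length → steps u = steps v → F u = F v) :
    ∑ u ∈ permsOf A, F u = ∑ σ : Equiv.Perm (Fin A.card), F (permList σ) := by
  set e := A.orderEmbOfFin rfl
  have hinj : Function.Injective fun σ : Equiv.Perm (Fin A.card) => List.ofFn (e ∘ σ) :=
    fun σ τ h => Equiv.ext fun i => e.injective (congrFun (List.ofFn_injective h) i)
  have himage : univ.image (fun σ : Equiv.Perm (Fin A.card) => List.ofFn (e ∘ σ)) = permsOf A := by
    refine eq_of_subset_of_card_le (fun u hu => ?_) ?_
    · obtain ⟨σ, -, rfl⟩ := mem_image.1 hu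
      refine mem_permsOf_iff_nodup.2 ⟨List.nodup_ofFn.2 (e.injective.comp σ.injective), ?_⟩
      ext x
      simp only [List.mem_toFinset, List.mem_ofFn, Function.comp_apply]
      refine ⟨fun ⟨i, hi⟩ => hi ▸ A.orderEmbOfFin_mem rfl _, fun hx => ?_⟩
      obtain ⟨j, rfl⟩ : x ∈ Set.range e := by rwa [A.range_orderEmbOfFin]
      exact ⟨σ.symm j, by simp⟩
    · rw [card_permsOf, card_image_of_injective _ hinj, card_univ, Fintype.card_perm,
        Fintype.card_fin]
  rw [← himage, sum_image fun σ _ τ _ h => hinj h]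
  refine sum_congr rfl fun σ _ => hF _ _ (by simp [permList]) (steps_ofFn_congr fun i j => ?_)
  simp

lemma isBallot_congr {u v : List ℤ} (hlen : u.length = v.length) (h : steps u = steps v) :
    IsBallot u ↔ IsBallot v := by
  simp only [isBallot_iff_prefixHt, prefixHt, hlen, h]

lemma depth_congr {u v : List ℤ} (hlen : u.length = v.length) (h : steps u = steps v) :
    depth u = depth v := by
  rw [depth_eq_prefixHt, depth_eq_prefixHt, hlen, show prefixHt u = prefixHt v by
    ext i; rw [prefixHt, prefixHt, h]]

lemma sum_permsOf_depth (A : Finset ℤ) (z : ℝ) :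
    ∑ w ∈ permsOf A, z ^ (depth w).toNat = Pdp A.card z :=
  sum_permsOf_eq_sum_perm A _ fun _ _ hlen h => by rw [depth_congr hlen h]

lemma sum_permsOf_ballot_descents (A : Finset ℤ) (t : ℝ) :
    ∑ u ∈ permsOf A, (if IsBallot u then t ^ descents u else 0) = Bdes A.card t :=
  sum_permsOf_eq_sum_perm A _ fun _ _ hlen h => by
    rw [isBallot_congr hlen h, descents_eq_length_filter_steps,
      descents_eq_length_filter_steps, h]

lemma sum_permsOf_ballot (A : Finset ℤ) :
    ∑ u ∈ permsOf A, (if IsBallot u then (1 : ℝ) else 0) = bcount A.card := by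
  rw [sum_permsOf_eq_sum_perm A _ fun _ _ hlen h => by rw [isBallot_congr hlen h], sum_boole,
    bcount, Nat.card_eq_fintype_card, Fintype.card_subtype]

theorem sum_cutWeight_permsOf (z : ℝ) (T : Finset ℤ) {c : ℕ} (hc : c ≤ T.card) :
    ∑ w ∈ permsOf T, cutWeight z w c =
      T.card.choose c * (z ^ c * Bdes c (1 / z ^ 2)) * bcount (T.card - c) := by
  have hsplit (w : List ℤ) : cutWeight z w c =
      (z ^ c * if IsBallot (w.take c).reverse then (1 / z ^ 2) ^ descents (w.take c).reverse
        else 0) * (if IsBallot (w.drop c) then 1 else 0) := by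
    rw [cutWeight, mul_ite (a := z ^ c), mul_zero, ite_zero_mul_ite_zero, mul_one]
  simp_rw [hsplit]
  rw [sum_permsOf_split (fun u => z ^ c * if IsBallot u then (1 / z ^ 2) ^ descents u else 0)
    (fun v => if IsBallot v then 1 else 0) hc, sum_congr rfl fun A hA => ?_, sum_const,
    card_powersetCard, nsmul_eq_mul, mul_assoc]
  obtain ⟨hAT, hAc⟩ := mem_powersetCard.1 hA
  rw [← mul_sum, sum_permsOf_ballot_descents, sum_permsOf_ballot, card_sdiff_of_subset hAT, hAc]

/-- The identity of exponential generating functions, read off at the coefficient of `xⁿ/n!`;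
the product on the right becomes a binomial convolution. -/
theorem depth_gf_relation (z : ℝ) (hz : z ≠ 0) (n : ℕ) :
    (1 + z) * Pdp n z - (if n = 0 then z else 0) =
      ∑ l ∈ Finset.range (n + 1),
        (n.choose l : ℝ) * (z ^ l * Bdes l (1 / z ^ 2)) * (bcount (n - l) : ℝ) := by
  rcases Nat.eq_zero_or_pos n with rfl | hn
  · simp [Pdp, Bdes, bcount, permList, depth, IsBallot, ht, ascents, descents]
  obtain ⟨T, rfl⟩ : ∃ T : Finset ℤ, T.card = n := ⟨(range n).map Nat.castEmbedding, by simp⟩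
  rw [if_neg hn.ne', sub_zero, ← sum_permsOf_depth, mul_sum]
  calc ∑ w ∈ permsOf T, (1 + z) * z ^ (depth w).toNat
      = ∑ w ∈ permsOf T, ∑ c ∈ range (T.card + 1), cutWeight z w c := by
        refine sum_congr rfl fun w hw => ?_
        have hlen := length_of_mem_permsOf hw
        rw [← hlen, sum_cutWeight hz (mem_permsOf_iff_nodup.1 hw).1
          (List.ne_nil_of_length_pos (hlen ▸ hn))]
    _ = ∑ c ∈ range (T.card + 1), ∑ w ∈ permsOf T, cutWeight z w c := sum_comm
    _ = _ := sum_congr rfl fun c hc =>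
        sum_cutWeight_permsOf z T (Nat.lt_succ_iff.1 (mem_range.1 hc))
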